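/- Let 𝓕 be a non-principal ultrafilter on ℕ, let t be a transcendental complex number, and let (a_n) be a sequence of algebraic numbers such that the element ∏_𝓕 a_n of the ultraproduct ∏_𝓕 ℚ̄ is algebraic over ℚ; then there is a polynomial with rational coefficients vanishing at a_n for almost all n. In particular, if no value is attained by almost all a_n and the a_n take infinitely many distinct values with each value attained only finitely often, then ∏_𝓕 a_n is transcendental over ℚ (under any field embedding of ℚ into the ultraproduct). -/

import Mathlib

/-!
Evaluating a rational polynomial at the germ of `a` is done coordinatewise, so the germ is a root
iff almost all `a n` are roots. For `p ≠ 0` those `n` lie in the preimage of the finitely many roots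
of `p`, a finite set when `a` has finite fibres, and a non-principal ultrafilter contains no finite set.
-/

open Filter Polynomial

theorem Filter.Germ.eval₂_coe {α R A : Type*} [CommSemiring R] [CommSemiring A] [Algebra R A]
    (l : Filter α) (f : α → A) (p : R[X]) :
    eval₂ ((Germ.coeRingHom l).comp (algebraMap R (α → A))) (f : Germ l A) p =
      ((fun n ↦ aeval (f n) p : α → A) : Germ l A) := by
  rw [← coe_coeRingHom, ← hom_eval₂, ← aeval_def, aeval_pi_apply]

theorem Filter.Germ.eval₂_coe_eq_zero_iff {α R A : Type*} [CommSemiring R] [CommSemiring A]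
    [Algebra R A] {l : Filter α} {f : α → A} {p : R[X]} :
    eval₂ ((Germ.coeRingHom l).comp (algebraMap R (α → A))) (f : Germ l A) p = 0 ↔
      ∀ᶠ n in l, aeval (f n) p = 0 := by
  rw [eval₂_coe, ← coe_zero, coe_eq]
  rfl

theorem Set.Finite.setOf_aeval_eq_zero {α K L : Type*} [Field K] [CommRing L] [IsDomain L]
    [Algebra K L] {f : α → L} (hf : ∀ v, {n | f n = v}.Finite) {p : K[X]} (hp : p ≠ 0) :
    {n | aeval (f n) p = 0}.Finite := by
  have hroots : {n | aeval (f n) p = 0} = f ⁻¹' p.rootSet L := by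
    ext n
    exact (mem_rootSet_of_ne hp).symm
  rw [hroots]
  exact (p.rootSet_finite L).preimage' fun v _ ↦ hf v

theorem germ_algebraic_iff_eventually_general (U : Ultrafilter ℕ) (hU : ∀ a : ℕ, U ≠ (pure a : Ultrafilter ℕ))
    (a : ℕ → AlgebraicClosure ℚ) :
    ((∃ p : Polynomial ℚ, p ≠ 0 ∧
        Polynomial.eval₂ ((Filter.Germ.coeRingHom (U : Filter ℕ)).comp (algebraMap ℚ (ℕ → AlgebraicClosure ℚ)))
          ((a : ℕ → AlgebraicClosure ℚ) : Filter.Germ (U : Filter ℕ) (AlgebraicClosure ℚ)) p = 0) →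
      ∃ p : Polynomial ℚ, p ≠ 0 ∧ ∀ᶠ n in (U : Filter ℕ), Polynomial.aeval (a n) p = 0) ∧
    ((∀ v : AlgebraicClosure ℚ, {n | a n = v}.Finite) → (Set.range a).Infinite →
      ∀ p : Polynomial ℚ,
        Polynomial.eval₂ ((Filter.Germ.coeRingHom (U : Filter ℕ)).comp (algebraMap ℚ (ℕ → AlgebraicClosure ℚ)))
          ((a : ℕ → AlgebraicClosure ℚ) : Filter.Germ (U : Filter ℕ) (AlgebraicClosure ℚ)) p = 0 →
        p = 0) := by
  refine ⟨fun ⟨p, hp, h⟩ ↦ ⟨p, hp, Germ.eval₂_coe_eq_zero_iff.mp h⟩, fun hfin _ p h ↦ ?_⟩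
  by_contra hp
  obtain ⟨n, -, rfl⟩ := Ultrafilter.eq_pure_of_finite_mem (Set.Finite.setOf_aeval_eq_zero hfin hp)
    (Germ.eval₂_coe_eq_zero_iff.mp h)
  exact hU n rfl

/-- If an element of the ultraproduct ∏_𝓕 ℚ̄ (germ of a sequence of algebraic numbers) is
algebraic over ℚ, then some nonzero rational polynomial vanishes at a_n for almost all n.
In particular, if each value is attained only finitely often and infinitely many distinct values
occur, then the germ is transcendental over ℚ. -/
theorem germ_algebraic_iff_eventually (U : Ultrafilter ℕ) (hU : ∀ a : ℕ, U ≠ (pure a : Ultrafilter ℕ))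
    (t : ℂ) (ht : Transcendental ℚ t)
    (a : ℕ → AlgebraicClosure ℚ) :
    ((∃ p : Polynomial ℚ, p ≠ 0 ∧
        Polynomial.eval₂ ((Filter.Germ.coeRingHom (U : Filter ℕ)).comp (algebraMap ℚ (ℕ → AlgebraicClosure ℚ)))
          ((a : ℕ → AlgebraicClosure ℚ) : Filter.Germ (U : Filter ℕ) (AlgebraicClosure ℚ)) p = 0) →
      ∃ p : Polynomial ℚ, p ≠ 0 ∧ ∀ᶠ n in (U : Filter ℕ), Polynomial.aeval (a n) p = 0) ∧
    ((∀ v : AlgebraicClosure ℚ, {n | a n = v}.Finite) → (Set.range a).Infinite →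
      ∀ p : Polynomial ℚ,
        Polynomial.eval₂ ((Filter.Germ.coeRingHom (U : Filter ℕ)).comp (algebraMap ℚ (ℕ → AlgebraicClosure ℚ)))
          ((a : ℕ → AlgebraicClosure ℚ) : Filter.Germ (U : Filter ℕ) (AlgebraicClosure ℚ)) p = 0 →
        p = 0) :=
  germ_algebraic_iff_eventually_general U hU a
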